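/- For positive integers m ≤ n, ∑_{k=1}^{m} (n−k)!/(m−k)! · ψ₀(n+1−k) = n!/((m−1)!(n−m+1)) · [ψ₀(n+1) − 1/(n−m+1)]. -/

import Mathlib

/-!
Substituting `k = m - i` and `d = n - m`, the sum becomes `∑_{i<m} (d+i)!/i! · ψ(d+1+i)`. The
closed form then follows by induction on `m` using only the recurrence `ψ(x+1) = ψ(x) + 1/x`,
which comes from differentiating `log Γ(x+1) = log x + log Γ(x)`.
-/

open Finset

/-- The `m`-th polygamma function: the `(m+1)`-th derivative of `log ∘ Γ`. -/
noncomputable def psi (m : ℕ) (x : ℝ) : ℝ :=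
  iteratedDeriv (m + 1) (fun y => Real.log (Real.Gamma y)) x

open Nat

theorem psi_zero_eq_deriv : psi 0 = deriv fun y => Real.log (Real.Gamma y) := by
  funext y; simp [psi, iteratedDeriv_one]

theorem differentiableAt_log_Gamma {x : ℝ} (hx : 0 < x) :
    DifferentiableAt ℝ (fun y => Real.log (Real.Gamma y)) x :=
  (Real.differentiableAt_Gamma fun m => by linarith [(m.cast_nonneg : (0 : ℝ) ≤ m)]).log
    (Real.Gamma_pos_of_pos hx).ne'

theorem psi_zero_add_one {x : ℝ} (hx : 0 < x) : psi 0 (x + 1) = psi 0 x + x⁻¹ := by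
  have hshift : (fun y => Real.log (Real.Gamma (y + 1))) =ᶠ[nhds x]
      fun y => Real.log y + Real.log (Real.Gamma y) := by
    filter_upwards [eventually_gt_nhds hx] with y hy
    rw [Real.Gamma_add_one hy.ne', Real.log_mul hy.ne' (Real.Gamma_pos_of_pos hy).ne']
  rw [psi_zero_eq_deriv, ← deriv_comp_add_const, hshift.deriv_eq,
    deriv_fun_add (Real.differentiableAt_log hx.ne') (differentiableAt_log_Gamma hx),
    Real.deriv_log, add_comm]

theorem sum_Icc_one_eq_sum_range_sub {M : Type*} [AddCommMonoid M] (g : ℕ → M) (m : ℕ) :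
    ∑ k ∈ Icc 1 m, g k = ∑ i ∈ range m, g (m - i) := by
  rw [range_eq_Ico, sum_Ico_reflect g 0 (le_succ m), Nat.add_sub_cancel_left]
  rfl

-- The factor `m / m!` stands for `1 / (m - 1)!`, so that the case `m = 0` holds as well.
theorem sum_range_factorial_div_mul_of_add_one {f : ℕ → ℝ}
    (hf : ∀ x : ℕ, 0 < x → f (x + 1) = f x + (x : ℝ)⁻¹) (d m : ℕ) :
    ∑ i ∈ range m, ((d + i)! : ℝ) / i ! * f (d + 1 + i) =
      m * (d + m)! / (m ! * (d + 1)) * (f (d + m + 1) - ((d : ℝ) + 1)⁻¹) := by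
  induction m with
  | zero => simp
  | succ m ih =>
    rw [sum_range_succ, ih, ← add_assoc, hf (d + m + 1) (succ_pos _), add_right_comm d 1 m,
      factorial_succ (d + m), factorial_succ m]
    push_cast
    field_simp
    ring

theorem stmt_17 (m n : ℕ) (hm : 0 < m) (hmn : m ≤ n) :
    ∑ k ∈ Icc 1 m, ((Nat.factorial (n - k) : ℝ) / (Nat.factorial (m - k) : ℝ)) * psi 0 ((n : ℝ) + 1 - k) =
      (Nat.factorial n : ℝ) / ((Nat.factorial (m - 1) : ℝ) * ((n : ℝ) - m + 1)) * (psi 0 ((n : ℝ) + 1) - 1 / ((n : ℝ) - m + 1)) := by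
  obtain ⟨d, rfl⟩ := Nat.exists_eq_add_of_le' hmn
  have hterm : ∀ i ∈ range m, ((d + m - (m - i))! : ℝ) / (m - (m - i))! *
      psi 0 (((d + m : ℕ) : ℝ) + 1 - (m - i : ℕ)) = ((d + i)! : ℝ) / i ! * psi 0 (d + 1 + i : ℕ) := by
    intro i hi
    have hi : i ≤ m := (mem_range.mp hi).le
    rw [show d + m - (m - i) = d + i by omega, Nat.sub_sub_self hi]
    push_cast [Nat.cast_sub hi]
    congr 2
    ring
  have hsum := sum_range_factorial_div_mul_of_add_one (f := fun x : ℕ => psi 0 x)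
    (fun x hx => by push_cast; exact psi_zero_add_one (by positivity)) d m
  have hfact : (m ! : ℝ) = m * (m - 1)! := by
    exact_mod_cast (Nat.mul_factorial_pred hm.ne').symm
  have hm' : (m : ℝ) ≠ 0 := by positivity
  rw [sum_Icc_one_eq_sum_range_sub, sum_congr rfl hterm, hsum, hfact]
  push_cast
  rw [add_sub_cancel_right]
  field_simp
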